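/- Let Σ_c, Σ̂_c ∈ ℝ^{c×c} and Σ_r, Σ̂_r ∈ ℝ^{r×r} be symmetric invertible matrices, and let X, M, M̂ ∈ ℝ^{c×r}. Then the plug-in matrix-based Mahalanobis squared distance satisfies the deterministic perturbation bound |tr(Σ̂_c⁻¹ (X − M̂) Σ̂_r⁻¹ (X − M̂)ᵀ) − tr(Σ_c⁻¹ (X − M) Σ_r⁻¹ (X − M)ᵀ)| ≤ ‖Σ_c⁻¹‖ ‖Σ_r⁻¹‖ ‖Σ̂_r⁻¹‖ ‖Σ̂_r − Σ_r‖ ‖X − M‖_F² + ‖Σ_c⁻¹‖ ‖Σ̂_c⁻¹‖ ‖Σ̂_r⁻¹‖ ‖Σ̂_c − Σ_c‖ ‖X − M‖_F² + 2 ‖Σ̂_c⁻¹‖ ‖Σ̂_r⁻¹‖ ‖X − M‖_F ‖M̂ − M‖_F + ‖Σ̂_c⁻¹‖ ‖Σ̂_r⁻¹‖ ‖M̂ − M‖_F², where ‖·‖ denotes the ℓ²-operator norm and ‖·‖_F the Frobenius norm. -/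

import Mathlib

/-!
Write `X - M̂ = E - D` with `E = X - M` and `D = M̂ - M`. Expanding both quadratic forms splits
the difference into five traces of the shape `tr (A U B Vᵀ)`, and each of them is at most
`‖A‖ ‖B‖ ‖U‖_F ‖V‖_F`: Cauchy–Schwarz for the Frobenius inner product `tr (W Vᵀ)`, together
with `‖U B‖_F ≤ ‖B‖ ‖U‖_F`, which holds row by row. The two traces that carry a difference of
inverses are finished with `Â⁻¹ - A⁻¹ = Â⁻¹ (A - Â) A⁻¹`.
-/

open Matrix

/-- The ℓ²-operator norm of a real matrix, i.e. the operator norm of the associated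
linear map between Euclidean spaces. -/
noncomputable def opNorm {m n : ℕ} (A : Matrix (Fin m) (Fin n) ℝ) : ℝ :=
  ‖LinearMap.toContinuousLinearMap (Matrix.toEuclideanLin A)‖

/-- The Frobenius norm of a real matrix: `‖U‖_F = √(tr(U Uᵀ))`. -/
noncomputable def frobNorm {m n : ℕ} (A : Matrix (Fin m) (Fin n) ℝ) : ℝ :=
  Real.sqrt ((A * Aᵀ).trace)

open scoped Matrix.Norms.L2Operator InnerProductSpace

section

variable {m n k l : ℕ}

lemma opNorm_eq_norm (A : Matrix (Fin m) (Fin n) ℝ) : opNorm A = ‖A‖ := rfl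

lemma opNorm_nonneg (A : Matrix (Fin m) (Fin n) ℝ) : 0 ≤ opNorm A := norm_nonneg A

lemma opNorm_transpose (A : Matrix (Fin m) (Fin n) ℝ) : opNorm Aᵀ = opNorm A := by
  simpa only [opNorm_eq_norm, conjTranspose_eq_transpose_of_trivial] using l2_opNorm_conjTranspose A

lemma opNorm_mul_le (A : Matrix (Fin m) (Fin n) ℝ) (B : Matrix (Fin n) (Fin l) ℝ) :
    opNorm (A * B) ≤ opNorm A * opNorm B :=
  l2_opNorm_mul A B

lemma opNorm_inv_sub_inv_le {A B : Matrix (Fin n) (Fin n) ℝ} (h : IsUnit A ↔ IsUnit B) :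
    opNorm (A⁻¹ - B⁻¹) ≤ opNorm A⁻¹ * opNorm (A - B) * opNorm B⁻¹ := by
  rw [inv_sub_inv h]
  calc opNorm (A⁻¹ * (B - A) * B⁻¹) ≤ opNorm (A⁻¹ * (B - A)) * opNorm B⁻¹ := opNorm_mul_le _ _
    _ ≤ opNorm A⁻¹ * opNorm (B - A) * opNorm B⁻¹ := by
      gcongr
      · exact opNorm_nonneg _
      · exact opNorm_mul_le _ _
    _ = opNorm A⁻¹ * opNorm (A - B) * opNorm B⁻¹ := by
      simp only [opNorm_eq_norm, norm_sub_rev B A]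

lemma trace_mul_transpose_eq_sum_inner (W V : Matrix (Fin m) (Fin n) ℝ) :
    (W * Vᵀ).trace = ∑ i, ⟪WithLp.toLp 2 (W i), WithLp.toLp 2 (V i)⟫_ℝ := by
  simp [trace, mul_apply, PiLp.inner_apply, mul_comm]

lemma frobNorm_eq_sqrt_sum_sq_norm_row (A : Matrix (Fin m) (Fin n) ℝ) :
    frobNorm A = √(∑ i, ‖WithLp.toLp 2 (A i)‖ ^ 2) := by
  simp only [frobNorm, trace_mul_transpose_eq_sum_inner, real_inner_self_eq_norm_sq]

lemma frobNorm_nonneg (A : Matrix (Fin m) (Fin n) ℝ) : 0 ≤ frobNorm A := Real.sqrt_nonneg _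

lemma frobNorm_transpose (A : Matrix (Fin m) (Fin n) ℝ) : frobNorm Aᵀ = frobNorm A := by
  rw [frobNorm, frobNorm, transpose_transpose, trace_mul_comm]

lemma abs_trace_mul_transpose_le (W V : Matrix (Fin m) (Fin n) ℝ) :
    |(W * Vᵀ).trace| ≤ frobNorm W * frobNorm V := by
  rw [trace_mul_transpose_eq_sum_inner, frobNorm_eq_sqrt_sum_sq_norm_row,
    frobNorm_eq_sqrt_sum_sq_norm_row]
  calc |∑ i, ⟪WithLp.toLp 2 (W i), WithLp.toLp 2 (V i)⟫_ℝ|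
      ≤ ∑ i, ‖WithLp.toLp 2 (W i)‖ * ‖WithLp.toLp 2 (V i)‖ :=
        (Finset.abs_sum_le_sum_abs _ _).trans
          (Finset.sum_le_sum fun i _ => abs_real_inner_le_norm _ _)
    _ ≤ _ := Real.sum_mul_le_sqrt_mul_sqrt _ _ _

lemma frobNorm_mul_le_opNorm_right (U : Matrix (Fin m) (Fin n) ℝ) (B : Matrix (Fin n) (Fin l) ℝ) :
    frobNorm (U * B) ≤ opNorm B * frobNorm U := by
  have hrow : ∀ i, ‖WithLp.toLp 2 ((U * B) i)‖ ≤ opNorm B * ‖WithLp.toLp 2 (U i)‖ := fun i => by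
    rw [← opNorm_transpose]
    simpa [mul_apply_eq_vecMul, mulVec_transpose, opNorm_eq_norm] using
      l2_opNorm_mulVec Bᵀ (WithLp.toLp 2 (U i))
  rw [frobNorm_eq_sqrt_sum_sq_norm_row, frobNorm_eq_sqrt_sum_sq_norm_row,
    ← Real.sqrt_sq (opNorm_nonneg B), ← Real.sqrt_mul (sq_nonneg _), Finset.mul_sum]
  gcongr with i
  rw [← mul_pow]
  gcongr
  exact hrow i

lemma frobNorm_mul_le_opNorm_left (A : Matrix (Fin m) (Fin n) ℝ) (U : Matrix (Fin n) (Fin l) ℝ) :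
    frobNorm (A * U) ≤ opNorm A * frobNorm U := by
  simpa only [← frobNorm_transpose (A * U), transpose_mul, opNorm_transpose, frobNorm_transpose]
    using frobNorm_mul_le_opNorm_right Uᵀ Aᵀ

lemma abs_trace_mul_mul_mul_transpose_le (A : Matrix (Fin m) (Fin k) ℝ)
    (U : Matrix (Fin k) (Fin l) ℝ) (B : Matrix (Fin l) (Fin n) ℝ) (V : Matrix (Fin m) (Fin n) ℝ) :
    |(A * U * B * Vᵀ).trace| ≤ opNorm A * opNorm B * frobNorm U * frobNorm V :=
  calc |(A * U * B * Vᵀ).trace| ≤ frobNorm (A * U * B) * frobNorm V :=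
        abs_trace_mul_transpose_le _ _
    _ ≤ opNorm B * (opNorm A * frobNorm U) * frobNorm V := by
        refine mul_le_mul_of_nonneg_right ?_ (frobNorm_nonneg V)
        exact (frobNorm_mul_le_opNorm_right _ _).trans
          (mul_le_mul_of_nonneg_left (frobNorm_mul_le_opNorm_left _ _) (opNorm_nonneg B))
    _ = opNorm A * opNorm B * frobNorm U * frobNorm V := by ring

lemma abs_trace_quadForm_sub_le (A A' : Matrix (Fin m) (Fin m) ℝ) (B B' : Matrix (Fin n) (Fin n) ℝ)
    (E D : Matrix (Fin m) (Fin n) ℝ) :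
    |(A' * (E - D) * B' * (E - D)ᵀ).trace - (A * E * B * Eᵀ).trace| ≤
      opNorm (A' - A) * opNorm B' * frobNorm E ^ 2 + opNorm A * opNorm (B' - B) * frobNorm E ^ 2
        + 2 * opNorm A' * opNorm B' * frobNorm E * frobNorm D
        + opNorm A' * opNorm B' * frobNorm D ^ 2 := by
  have hsplit : (A' * (E - D) * B' * (E - D)ᵀ).trace - (A * E * B * Eᵀ).trace
      = ((A' - A) * E * B' * Eᵀ).trace + (A * E * (B' - B) * Eᵀ).trace
        - (A' * D * B' * Eᵀ).trace - (A' * E * B' * Dᵀ).trace + (A' * D * B' * Dᵀ).trace := by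
    simp only [transpose_sub, Matrix.mul_sub, Matrix.sub_mul, trace_sub]
    ring
  have h₁ := abs_le.mp (abs_trace_mul_mul_mul_transpose_le (A' - A) E B' E)
  have h₂ := abs_le.mp (abs_trace_mul_mul_mul_transpose_le A E (B' - B) E)
  have h₃ := abs_le.mp (abs_trace_mul_mul_mul_transpose_le A' D B' E)
  have h₄ := abs_le.mp (abs_trace_mul_mul_mul_transpose_le A' E B' D)
  have h₅ := abs_le.mp (abs_trace_mul_mul_mul_transpose_le A' D B' D)
  rw [hsplit, abs_le]
  constructor <;> linarith

end

theorem plugin_matrix_msd_perturbation_bound_general {c r : ℕ}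
    (Sc Schat : Matrix (Fin c) (Fin c) ℝ) (Sr Srhat : Matrix (Fin r) (Fin r) ℝ)
    (hSc : IsUnit Sc.det) (hSchat : IsUnit Schat.det)
    (hSr : IsUnit Sr.det) (hSrhat : IsUnit Srhat.det)
    (X M Mhat : Matrix (Fin c) (Fin r) ℝ) :
    |(Schat⁻¹ * (X - Mhat) * Srhat⁻¹ * (X - Mhat)ᵀ).trace
        - (Sc⁻¹ * (X - M) * Sr⁻¹ * (X - M)ᵀ).trace| ≤
      opNorm Sc⁻¹ * opNorm Sr⁻¹ * opNorm Srhat⁻¹ * opNorm (Srhat - Sr) * frobNorm (X - M) ^ 2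
        + opNorm Sc⁻¹ * opNorm Schat⁻¹ * opNorm Srhat⁻¹ * opNorm (Schat - Sc)
            * frobNorm (X - M) ^ 2
        + 2 * opNorm Schat⁻¹ * opNorm Srhat⁻¹ * frobNorm (X - M) * frobNorm (Mhat - M)
        + opNorm Schat⁻¹ * opNorm Srhat⁻¹ * frobNorm (Mhat - M) ^ 2 := by
  have hc := opNorm_inv_sub_inv_le (A := Schat) (B := Sc) <| iff_of_true
    ((isUnit_iff_isUnit_det _).mpr hSchat) ((isUnit_iff_isUnit_det _).mpr hSc)
  have hr := opNorm_inv_sub_inv_le (A := Srhat) (B := Sr) <| iff_of_true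
    ((isUnit_iff_isUnit_det _).mpr hSrhat) ((isUnit_iff_isUnit_det _).mpr hSr)
  have key := abs_trace_quadForm_sub_le Sc⁻¹ Schat⁻¹ Sr⁻¹ Srhat⁻¹ (X - M) (Mhat - M)
  rw [sub_sub_sub_cancel_right] at key
  have hF := sq_nonneg (frobNorm (X - M))
  linarith [mul_le_mul_of_nonneg_right hc (mul_nonneg (opNorm_nonneg Srhat⁻¹) hF),
    mul_le_mul_of_nonneg_left hr (mul_nonneg (opNorm_nonneg Sc⁻¹) hF)]

/-- Deterministic perturbation bound for the plug-in matrix-based Mahalanobis squared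
distance: for symmetric invertible `Sc, Ŝc ∈ ℝ^{c×c}`, `Sr, Ŝr ∈ ℝ^{r×r}` and
`X, M, M̂ ∈ ℝ^{c×r}`,
`|tr(Ŝc⁻¹ (X − M̂) Ŝr⁻¹ (X − M̂)ᵀ) − tr(Sc⁻¹ (X − M) Sr⁻¹ (X − M)ᵀ)|
  ≤ ‖Sc⁻¹‖ ‖Sr⁻¹‖ ‖Ŝr⁻¹‖ ‖Ŝr − Sr‖ ‖X − M‖_F²
  + ‖Sc⁻¹‖ ‖Ŝc⁻¹‖ ‖Ŝr⁻¹‖ ‖Ŝc − Sc‖ ‖X − M‖_F²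
  + 2 ‖Ŝc⁻¹‖ ‖Ŝr⁻¹‖ ‖X − M‖_F ‖M̂ − M‖_F
  + ‖Ŝc⁻¹‖ ‖Ŝr⁻¹‖ ‖M̂ − M‖_F²`,
with ℓ²-operator norms on square matrices and Frobenius norms on the `c × r` matrices. -/
theorem plugin_matrix_msd_perturbation_bound {c r : ℕ}
    (Sc Schat : Matrix (Fin c) (Fin c) ℝ) (Sr Srhat : Matrix (Fin r) (Fin r) ℝ)
    (hSc_symm : Scᵀ = Sc) (hSchat_symm : Schatᵀ = Schat)
    (hSr_symm : Srᵀ = Sr) (hSrhat_symm : Srhatᵀ = Srhat)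
    (hSc : IsUnit Sc.det) (hSchat : IsUnit Schat.det)
    (hSr : IsUnit Sr.det) (hSrhat : IsUnit Srhat.det)
    (X M Mhat : Matrix (Fin c) (Fin r) ℝ) :
    |(Schat⁻¹ * (X - Mhat) * Srhat⁻¹ * (X - Mhat)ᵀ).trace
        - (Sc⁻¹ * (X - M) * Sr⁻¹ * (X - M)ᵀ).trace| ≤
      opNorm Sc⁻¹ * opNorm Sr⁻¹ * opNorm Srhat⁻¹ * opNorm (Srhat - Sr) * frobNorm (X - M) ^ 2
        + opNorm Sc⁻¹ * opNorm Schat⁻¹ * opNorm Srhat⁻¹ * opNorm (Schat - Sc)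
            * frobNorm (X - M) ^ 2
        + 2 * opNorm Schat⁻¹ * opNorm Srhat⁻¹ * frobNorm (X - M) * frobNorm (Mhat - M)
        + opNorm Schat⁻¹ * opNorm Srhat⁻¹ * frobNorm (Mhat - M) ^ 2 :=
  plugin_matrix_msd_perturbation_bound_general Sc Schat Sr Srhat hSc hSchat hSr hSrhat X M Mhat
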